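/- Let g₁ = (g₁¹, g₁², 0) and g₂ = (g₂¹, g₂², 0) be elements of the Nil group with d := g₁¹g₂² − g₁²g₂¹ ≠ 0, and set N := √((g₁¹)² + (g₁²)²). Then there exist θ ∈ ℝ and h in the Nil group such that h·σ_θ(g₁)·h⁻¹ = (N, 0, 0) and h·σ_θ(g₂)·h⁻¹ = ((g₁¹g₂¹ + g₁²g₂²)/N, (g₁¹g₂² − g₁²g₂¹)/N, 0), where σ_θ(g) := (R_θ(g¹,g²), g³ + ζ_θ(g¹,g²)). -/

import Mathlib

noncomputable section

open Real

/-- Multiplication in the Nil (Bianchi II) group on ℝ³. -/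
def nilMul (g h : ℝ × ℝ × ℝ) : ℝ × ℝ × ℝ :=
  (g.1 + h.1, g.2.1 + h.2.1, g.2.2 + h.2.2 + g.1 * h.2.1)

/-- Inverse in the Nil group. -/
def nilInv (g : ℝ × ℝ × ℝ) : ℝ × ℝ × ℝ :=
  (-g.1, -g.2.1, -g.2.2 + g.1 * g.2.1)

/-- `ζ_θ(x,y) = ½((x²−y²)cos θ − 2xy sin θ) sin θ`. -/
def zeta (θ x y : ℝ) : ℝ :=
  (1 / 2) * ((x ^ 2 - y ^ 2) * Real.cos θ - 2 * x * y * Real.sin θ) * Real.sin θ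

/-- The group automorphism `σ_θ(g) = (R_θ(g¹,g²), g³ + ζ_θ(g¹,g²))` of Nil. -/
def sigmaMap (θ : ℝ) (g : ℝ × ℝ × ℝ) : ℝ × ℝ × ℝ :=
  (g.1 * Real.cos θ - g.2.1 * Real.sin θ,
   g.1 * Real.sin θ + g.2.1 * Real.cos θ,
   g.2.2 + zeta θ g.1 g.2.1)

/-! Conjugation by `h` fixes the horizontal part of `g` and shifts its central coordinate by the
linear form `h¹g² − h²g¹`; when `g₁, g₂` have independent horizontal parts, Cramer's rule gives an
`h` that kills both central coordinates, whatever `ζ_θ` contributed to them. So it suffices to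
pick the rotation `θ` that sends `(g₁¹, g₁²)` to `(N, 0)`, i.e. `cos θ = g₁¹/N`, `sin θ = −g₁²/N`. -/

theorem nilMul_nilMul_nilInv (h g : ℝ × ℝ × ℝ) :
    nilMul (nilMul h g) (nilInv h) = (g.1, g.2.1, g.2.2 + h.1 * g.2.1 - h.2.1 * g.1) := by
  simp only [nilMul, nilInv, Prod.mk.injEq]
  refine ⟨?_, ?_, ?_⟩ <;> ring

theorem exists_mul_sub_mul_eq_of_det_ne_zero {x y x' y' : ℝ} (hdet : x * y' - y * x' ≠ 0)
    (c c' : ℝ) : ∃ a b : ℝ, a * y - b * x = c ∧ a * y' - b * x' = c' := by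
  refine ⟨(c' * x - c * x') / (x * y' - y * x'), (c' * y - c * y') / (x * y' - y * x'), ?_, ?_⟩ <;>
  · rw [div_mul_eq_mul_div, div_mul_eq_mul_div, div_sub_div_same, div_eq_iff hdet]
    ring

theorem exists_nil_conj_eq_of_det_ne_zero {g g' : ℝ × ℝ × ℝ}
    (hdet : g.1 * g'.2.1 - g.2.1 * g'.1 ≠ 0) (c c' : ℝ) :
    ∃ h : ℝ × ℝ × ℝ, nilMul (nilMul h g) (nilInv h) = (g.1, g.2.1, c) ∧
      nilMul (nilMul h g') (nilInv h) = (g'.1, g'.2.1, c') := by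
  obtain ⟨a, b, hc, hc'⟩ := exists_mul_sub_mul_eq_of_det_ne_zero hdet (c - g.2.2) (c' - g'.2.2)
  refine ⟨(a, b, 0), ?_, ?_⟩ <;>
  · simp only [nilMul_nilMul_nilInv, Prod.mk.injEq, true_and]
    linarith

theorem exists_cos_sin_eq_div_sqrt {x y : ℝ} (hxy : 0 < x ^ 2 + y ^ 2) :
    ∃ θ : ℝ, cos θ = x / √(x ^ 2 + y ^ 2) ∧ sin θ = y / √(x ^ 2 + y ^ 2) := by
  have hnorm : ‖(⟨x, y⟩ : ℂ)‖ = √(x ^ 2 + y ^ 2) := by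
    rw [Complex.norm_def, Complex.normSq_mk]
    ring_nf
  have hz : (⟨x, y⟩ : ℂ) ≠ 0 := by
    intro h0
    simp only [Complex.ext_iff, Complex.zero_re, Complex.zero_im] at h0
    simp [h0.1, h0.2] at hxy
  exact ⟨Complex.arg ⟨x, y⟩, by rw [Complex.cos_arg hz, hnorm], by rw [Complex.sin_arg, hnorm]⟩

theorem sigmaMap_of_cos_sin {θ x y N : ℝ} (hN : N ≠ 0) (hcos : cos θ = x / N)
    (hsin : sin θ = -y / N) (u v w : ℝ) :
    (sigmaMap θ (u, v, w)).1 = (x * u + y * v) / N ∧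
      (sigmaMap θ (u, v, w)).2.1 = (x * v - y * u) / N := by
  simp only [sigmaMap, hcos, hsin]
  constructor <;> field_simp <;> ring

/-- For `g₁ = (g₁¹,g₁²,0)`, `g₂ = (g₂¹,g₂²,0)` with `d = g₁¹g₂² − g₁²g₂¹ ≠ 0` and
`N = √((g₁¹)² + (g₁²)²)`, there are `θ` and `h` with
`h·σ_θ(g₁)·h⁻¹ = (N,0,0)` and `h·σ_θ(g₂)·h⁻¹ = ((g₁¹g₂¹+g₁²g₂²)/N, (g₁¹g₂²−g₁²g₂¹)/N, 0)`. -/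
theorem nil_rotate_to_teichmuller (g₁₁ g₁₂ g₂₁ g₂₂ : ℝ)
    (hd : g₁₁ * g₂₂ - g₁₂ * g₂₁ ≠ 0) :
    ∃ (θ : ℝ) (h : ℝ × ℝ × ℝ),
      nilMul (nilMul h (sigmaMap θ (g₁₁, g₁₂, (0 : ℝ)))) (nilInv h)
        = (Real.sqrt (g₁₁ ^ 2 + g₁₂ ^ 2), (0 : ℝ), (0 : ℝ)) ∧
      nilMul (nilMul h (sigmaMap θ (g₂₁, g₂₂, (0 : ℝ)))) (nilInv h)
        = ((g₁₁ * g₂₁ + g₁₂ * g₂₂) / Real.sqrt (g₁₁ ^ 2 + g₁₂ ^ 2),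
           (g₁₁ * g₂₂ - g₁₂ * g₂₁) / Real.sqrt (g₁₁ ^ 2 + g₁₂ ^ 2), (0 : ℝ)) := by
  set N := √(g₁₁ ^ 2 + g₁₂ ^ 2)
  have hg₁ : ¬(g₁₁ = 0 ∧ g₁₂ = 0) := by
    rintro ⟨h₁, h₂⟩
    exact hd (by rw [h₁, h₂]; ring)
  have hpos : 0 < g₁₁ ^ 2 + g₁₂ ^ 2 := by
    rcases not_and_or.mp hg₁ with h | h <;> positivity
  have hN : N ≠ 0 := (Real.sqrt_pos.mpr hpos).ne'
  obtain ⟨θ, hcos, hsin⟩ := exists_cos_sin_eq_div_sqrt (x := g₁₁) (y := -g₁₂) (by rwa [neg_sq])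
  rw [neg_sq] at hcos hsin
  obtain ⟨σ₁₁, σ₁₂⟩ := sigmaMap_of_cos_sin hN hcos hsin g₁₁ g₁₂ 0
  obtain ⟨σ₂₁, σ₂₂⟩ := sigmaMap_of_cos_sin hN hcos hsin g₂₁ g₂₂ 0
  have hNN : (g₁₁ * g₁₁ + g₁₂ * g₁₂) / N = N := by
    rw [div_eq_iff hN]
    linear_combination -Real.mul_self_sqrt hpos.le
  rw [hNN] at σ₁₁
  rw [mul_comm g₁₁, sub_self, zero_div] at σ₁₂
  have hdet : (sigmaMap θ (g₁₁, g₁₂, 0)).1 * (sigmaMap θ (g₂₁, g₂₂, 0)).2.1 -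
      (sigmaMap θ (g₁₁, g₁₂, 0)).2.1 * (sigmaMap θ (g₂₁, g₂₂, 0)).1 ≠ 0 := by
    rw [σ₁₁, σ₁₂, σ₂₂, zero_mul, sub_zero, mul_div_cancel₀ _ hN]
    exact hd
  obtain ⟨h, h₁, h₂⟩ := exists_nil_conj_eq_of_det_ne_zero hdet 0 0
  exact ⟨θ, h, by rw [h₁, σ₁₁, σ₁₂], by rw [h₂, σ₂₁, σ₂₂]⟩
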